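/- If T is a tournament of order n, then n/2 ≤ dc(T)·dac(T). -/

import Mathlib

/-!
Fix an acyclic colouring with `dc(T)` colours; some class `S` has at least `n / dc(T)` vertices.
An acyclic set of a tournament is transitive, so `S = {v₀, …, v_{m-1}}` with `vᵢ → vⱼ` for `i < j`.
Colour `vᵢ` by `i mod h`, `h = ⌈m/2⌉`, and every vertex outside `S` by itself: for `a < b < h` the
arcs `v_a → v_b` and `v_b → v_{a+h}` make the `h` classes inside `S` pairwise complete. Two classes
with no arc from the first to the second can be merged without creating a cycle, and they are not
both classes inside `S`; merging such pairs, always absorbing a class not inside `S`, ends in a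
complete acyclic colouring that keeps the `h` classes inside `S`, so `h ≤ dac(T)` and
`n ≤ dc(T)·m ≤ 2·dc(T)·dac(T)`.
-/

/-- The subset `S` of vertices induces an acyclic subdigraph of the digraph with
arc relation `A` (i.e. there is no directed cycle all of whose vertices lie in `S`). -/
def AcyclicSet {V : Type*} (A : V → V → Prop) (S : Set V) : Prop :=
  ∀ v : V, ¬ Relation.TransGen (fun x y => x ∈ S ∧ y ∈ S ∧ A x y) v v

/-- `c` is an acyclic vertex coloring of the digraph `A` with `k` colors:
`c` is surjective and every chromatic class induces an acyclic subdigraph. -/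
def IsAcyclicColoring {V : Type*} (A : V → V → Prop) {k : ℕ} (c : V → Fin k) : Prop :=
  Function.Surjective c ∧ ∀ i : Fin k, AcyclicSet A {v | c v = i}

/-- `c` is a complete vertex coloring of the digraph `A` with `k` colors:
`c` is surjective and for every ordered pair of distinct colors `(i, j)` there is
an arc `(u, v)` with `c u = i` and `c v = j`. -/
def IsCompleteColoring {V : Type*} (A : V → V → Prop) {k : ℕ} (c : V → Fin k) : Prop :=
  Function.Surjective c ∧
    ∀ i j : Fin k, i ≠ j → ∃ u v : V, A u v ∧ c u = i ∧ c v = j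

/-- The diachromatic number: the largest `k` admitting a complete acyclic `k`-coloring. -/
noncomputable def dac {V : Type*} (A : V → V → Prop) : ℕ :=
  sSup {k | ∃ c : V → Fin k, IsAcyclicColoring A c ∧ IsCompleteColoring A c}

/-- The dichromatic number: the smallest `k` admitting an acyclic `k`-coloring. -/
noncomputable def dc {V : Type*} (A : V → V → Prop) : ℕ :=
  sInf {k | ∃ c : V → Fin k, IsAcyclicColoring A c}

/-- The pseudoachromatic number: the largest `k` admitting a complete `k`-coloring. -/
noncomputable def psi {V : Type*} (A : V → V → Prop) : ℕ :=
  sSup {k | ∃ c : V → Fin k, IsCompleteColoring A c}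

/-- `A` is a tournament: no loops, and for distinct vertices exactly one of the
two possible arcs is present. -/
def IsTournament {V : Type*} (A : V → V → Prop) : Prop :=
  (∀ v : V, ¬ A v v) ∧ ∀ u v : V, u ≠ v → (A u v ↔ ¬ A v u)

open Finset Relation

section Digraph

variable {V ι : Type*} {A : V → V → Prop}

theorem AcyclicSet.mono {S T : Set V} (hST : S ⊆ T) (hT : AcyclicSet A T) : AcyclicSet A S :=
  fun v hv => hT v (TransGen.mono (fun _ _ ⟨hx, hy, hxy⟩ => ⟨hST hx, hST hy, hxy⟩) _ _ hv)

theorem acyclicSet_singleton (hA : ∀ v, ¬ A v v) (w : V) : AcyclicSet A {w} := by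
  intro v hv
  obtain ⟨b, ⟨rfl, rfl, hvv⟩, -⟩ := TransGen.head'_iff.mp hv
  exact hA _ hvv

/-- No arc leads from `Y` back into `X`, so a closed walk in `X ∪ Y` stays in `X` if it meets `X`
(every predecessor of a vertex of `X` is in `X`) and in `Y` otherwise. -/
theorem AcyclicSet.union {X Y : Set V} (hX : AcyclicSet A X) (hY : AcyclicSet A Y)
    (hYX : ∀ u ∈ Y, ∀ v ∈ X, ¬ A u v) : AcyclicSet A (X ∪ Y) := by
  intro v hv
  obtain ⟨b, ⟨hvXY, -, -⟩, -⟩ := TransGen.head'_iff.mp hv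
  rcases hvXY with hvX | hvY
  · suffices ∀ w, TransGen (fun x y => x ∈ X ∪ Y ∧ y ∈ X ∪ Y ∧ A x y) v w → w ∈ X →
        TransGen (fun x y => x ∈ X ∧ y ∈ X ∧ A x y) v w from hX v (this v hv hvX)
    intro w hw
    induction hw with
    | single h => exact fun hw => .single ⟨hvX, hw, h.2.2⟩
    | tail _ h ih =>
      intro hw
      have hu : _ ∈ X := h.1.resolve_right fun hu => hYX _ hu _ hw h.2.2
      exact (ih hu).tail ⟨hu, hw, h.2.2⟩
  · suffices ∀ w, TransGen (fun x y => x ∈ X ∪ Y ∧ y ∈ X ∪ Y ∧ A x y) w v → w ∈ Y →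
        TransGen (fun x y => x ∈ Y ∧ y ∈ Y ∧ A x y) w v from hY v (this v hv hvY)
    intro w hw
    induction hw using TransGen.head_induction_on with
    | single h => exact fun hw => .single ⟨hw, hvY, h.2.2⟩
    | head h _ ih =>
      intro hw
      have hu : _ ∈ Y := h.2.1.resolve_left fun hu => hYX _ hw _ hu h.2.2
      exact (ih hu).head ⟨hw, hu, h.2.2⟩

section Coloring

def IsCompleteOn (A : V → V → Prop) (c : V → ι) (M : Finset ι) : Prop :=
  ∀ i ∈ M, ∀ j ∈ M, i ≠ j → ∃ u v, A u v ∧ c u = i ∧ c v = j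

variable [DecidableEq ι]

def recolor (c : V → ι) (b a : ι) : V → ι := fun v => if c v = b then a else c v

theorem recolor_of_ne {c : V → ι} {b : ι} (a : ι) {v : V} (h : c v ≠ b) :
    recolor c b a v = c v :=
  if_neg h

theorem acyclicSet_recolor {c : V → ι} {a b : ι} (hc : ∀ i, AcyclicSet A {v | c v = i})
    (hab : AcyclicSet A ({v | c v = a} ∪ {v | c v = b})) (i : ι) :
    AcyclicSet A {v | recolor c b a v = i} := by
  by_cases hi : i = a
  · refine hab.mono fun v hv => ?_
    by_cases hvb : c v = b
    · exact Or.inr hvb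
    · exact Or.inl ((recolor_of_ne a hvb).symm.trans (hv.trans hi))
  · refine (hc i).mono fun v hv => ?_
    by_cases hvb : c v = b
    · exact absurd ((if_pos hvb).symm.trans hv) (Ne.symm hi)
    · exact (recolor_of_ne a hvb).symm.trans hv

variable [Fintype V]

theorem image_recolor {c : V → ι} {a b : ι} (ha : a ∈ univ.image c) (hab : a ≠ b) :
    univ.image (recolor c b a) = (univ.image c).erase b := by
  ext i
  simp only [mem_image, mem_univ, true_and, mem_erase, recolor]
  constructor
  · rintro ⟨v, rfl⟩
    split_ifs with h
    · exact ⟨hab, by simpa using ha⟩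
    · exact ⟨h, v, rfl⟩
  · rintro ⟨hib, v, rfl⟩
    exact ⟨v, if_neg hib⟩

theorem card_image_le_dac (c : V → ι) (hc : ∀ i, AcyclicSet A {v | c v = i})
    (hcomp : IsCompleteOn A c (univ.image c)) :
    #(univ.image c) ≤ dac A := by
  set e := (univ.image c).equivFin
  let c' : V → Fin #(univ.image c) := fun v => e ⟨c v, mem_image_of_mem c (mem_univ v)⟩
  have hc' : ∀ v k, c' v = k ↔ c v = e.symm k := fun v k => by
    rw [← e.eq_symm_apply, Subtype.ext_iff]
  have hsurj : Function.Surjective c' := fun k => by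
    obtain ⟨v, -, hv⟩ := mem_image.mp (e.symm k).2
    exact ⟨v, (hc' v k).mpr hv⟩
  refine le_csSup ⟨Fintype.card V, ?_⟩ ⟨c', ⟨hsurj, fun k => ?_⟩, hsurj, fun k l hkl => ?_⟩
  · rintro m ⟨d, ⟨hd, -⟩, -⟩
    simpa using Fintype.card_le_of_surjective d hd
  · simpa only [hc'] using hc (e.symm k)
  · obtain ⟨u, v, huv, hu, hv⟩ :=
      hcomp _ (e.symm k).2 _ (e.symm l).2 (by simpa [Subtype.ext_iff] using hkl)
    exact ⟨u, v, huv, (hc' u k).mpr hu, (hc' v l).mpr hv⟩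

theorem card_le_dac_of_isCompleteOn (c : V → ι) (hc : ∀ i, AcyclicSet A {v | c v = i})
    {M : Finset ι} (hM : M ⊆ univ.image c) (hMc : IsCompleteOn A c M) : #M ≤ dac A := by
  induction hn : #(univ.image c) using Nat.strong_induction_on generalizing c with
  | _ n ih =>
  have merge : ∀ a ∈ univ.image c, ∀ b ∈ univ.image c, a ≠ b → b ∉ M →
      AcyclicSet A ({v | c v = a} ∪ {v | c v = b}) → #M ≤ dac A := by
    intro a ha b hb hab hbM hunion
    have hfix : ∀ {u i}, c u = i → i ∈ M → recolor c b a u = i := fun hu hi =>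
      (recolor_of_ne a (hu ▸ ne_of_mem_of_not_mem hi hbM)).trans hu
    refine ih _ ?_ (recolor c b a) (acyclicSet_recolor hc hunion) ?_ ?_ rfl
    · rw [← hn, image_recolor ha hab]
      exact card_erase_lt_of_mem hb
    · rw [image_recolor ha hab]
      exact fun i hi => mem_erase.mpr ⟨ne_of_mem_of_not_mem hi hbM, hM hi⟩
    · intro i hi j hj hij
      obtain ⟨u, v, huv, hu, hv⟩ := hMc i hi j hj hij
      exact ⟨u, v, huv, hfix hu hi, hfix hv hj⟩
  by_cases hcomp : IsCompleteOn A c (univ.image c)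
  · exact (card_le_card hM).trans (card_image_le_dac c hc hcomp)
  simp only [IsCompleteOn, not_forall, not_exists, not_and] at hcomp
  obtain ⟨i, hi, j, hj, hij, hno⟩ := hcomp
  have hunion : AcyclicSet A ({v | c v = j} ∪ {v | c v = i}) :=
    (hc j).union (hc i) fun u hu v hv huv => hno u v huv hu hv
  by_cases hjM : j ∈ M
  · have hiM : i ∉ M := fun hiM =>
      let ⟨u, v, huv, hu, hv⟩ := hMc i hiM j hjM hij
      hno u v huv hu hv
    exact merge j hj i hi hij.symm hiM hunion
  · exact merge i hi j hj hij hjM (Set.union_comm _ _ ▸ hunion)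

end Coloring

theorem exists_lt_mod_eq {m a b : ℕ} (ha : a < (m + 1) / 2) (hb : b < (m + 1) / 2) (hab : a ≠ b) :
    ∃ i j, i < j ∧ j < m ∧ i % ((m + 1) / 2) = a ∧ j % ((m + 1) / 2) = b := by
  rcases hab.lt_or_gt with h | h
  · exact ⟨a, b, h, by omega, Nat.mod_eq_of_lt ha, Nat.mod_eq_of_lt hb⟩
  · exact ⟨a, b + (m + 1) / 2, by omega, by omega, Nat.mod_eq_of_lt ha,
      by rw [Nat.add_mod_right, Nat.mod_eq_of_lt hb]⟩

namespace IsTournament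

theorem trans_of_acyclicSet (hT : IsTournament A) {S : Set V} (hS : AcyclicSet A S)
    {x y z : V} (hx : x ∈ S) (hy : y ∈ S) (hz : z ∈ S) (hxy : A x y) (hyz : A y z) : A x z := by
  by_contra hxz
  have hxy' : TransGen (fun x y => x ∈ S ∧ y ∈ S ∧ A x y) x y := .single ⟨hx, hy, hxy⟩
  by_cases hzx : z = x
  · exact hS x (hxy'.tail ⟨hy, hzx ▸ hz, hzx ▸ hyz⟩)
  · exact hS x ((hxy'.tail ⟨hy, hz, hyz⟩).tail ⟨hz, hx, (hT.2 z x hzx).mpr hxz⟩)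

theorem exists_equiv_fin_of_acyclicSet (hT : IsTournament A) (S : Finset V)
    (hS : AcyclicSet A ↑S) : ∃ e : Fin #S ≃ S, ∀ i j, i < j → A (e i) (e j) := by
  classical
  have : IsStrictTotalOrder S (fun x y => A x y) :=
    { trichotomous := fun x y hxy hyx => Subtype.ext <| by
        by_contra hne
        exact hyx ((hT.2 y x (Ne.symm hne)).mpr hxy)
      irrefl := fun x => hT.1 x
      trans := fun x y z => hT.trans_of_acyclicSet hS x.2 y.2 z.2 }
  let := linearOrderOfSTO (fun x y : S => A x y)
  let e := monoEquivOfFin S (Fintype.card_coe S)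
  exact ⟨e.toEquiv, fun i j hij => e.strictMono hij⟩

theorem card_le_two_mul_dac [Fintype V] (hT : IsTournament A) (S : Finset V)
    (hS : AcyclicSet A ↑S) : #S ≤ 2 * dac A := by
  classical
  obtain ⟨e, he⟩ := hT.exists_equiv_fin_of_acyclicSet S hS
  set h := (#S + 1) / 2
  let c : V → ℕ ⊕ V := fun v =>
    if hv : v ∈ S then .inl ((e.symm ⟨v, hv⟩ : ℕ) % h) else .inr v
  have hce : ∀ i, c (e i) = .inl (i % h) := fun i => by simp [c]
  have hc : ∀ x, AcyclicSet A {v | c v = x} := by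
    rintro (n | w)
    · refine hS.mono fun v hv => mem_coe.mpr ?_
      by_contra hvS
      simp [c, hvS] at hv
    · refine (acyclicSet_singleton hT.1 w).mono fun v hv => ?_
      by_cases hvS : v ∈ S <;> simp_all [c]
  set M := (range h).map .inl
  have hM : M ⊆ univ.image c := by
    intro x hx
    obtain ⟨a, ha, rfl⟩ := mem_map.mp hx
    have ha : a < h := mem_range.mp ha
    exact mem_image.mpr ⟨e ⟨a, by omega⟩, mem_univ _, by rw [hce, Nat.mod_eq_of_lt ha]; rfl⟩
  have hMc : IsCompleteOn A c M := by
    simp only [IsCompleteOn, M, mem_map, mem_range]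
    rintro _ ⟨a, ha, rfl⟩ _ ⟨b, hb, rfl⟩ hab
    obtain ⟨i, j, hij, hj, rfl, rfl⟩ := exists_lt_mod_eq ha hb (fun h => hab (by rw [h]))
    exact ⟨e ⟨i, hij.trans hj⟩, e ⟨j, hj⟩, he _ _ hij, hce _, hce _⟩
  have := card_le_dac_of_isCompleteOn c hc hM hMc
  simp only [M, card_map, card_range] at this
  omega

end IsTournament

section Dichromatic

variable [Fintype V]

theorem exists_isAcyclicColoring_dc (hA : ∀ v, ¬ A v v) :
    ∃ c : V → Fin (dc A), IsAcyclicColoring A c := by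
  let e := Fintype.equivFin V
  refine Nat.sInf_mem (s := {k | ∃ c : V → Fin k, IsAcyclicColoring A c}) ⟨_, e, e.surjective,
    fun i => (acyclicSet_singleton hA (e.symm i)).mono fun _ hv => ?_⟩
  exact e.eq_symm_apply.mpr hv

theorem exists_acyclicSet_card_le_dc_mul (hA : ∀ v, ¬ A v v) :
    ∃ S : Finset V, AcyclicSet A ↑S ∧ (Fintype.card V : ℝ) ≤ dc A * #S := by
  classical
  obtain ⟨c, -, hc⟩ := exists_isAcyclicColoring_dc hA
  rcases (dc A).eq_zero_or_pos with h0 | hpos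
  · have : IsEmpty V := ⟨fun v => (h0 ▸ c v).elim0⟩
    exact ⟨∅, fun v => isEmptyElim v, by simp⟩
  have : Nonempty (Fin (dc A)) := ⟨⟨0, hpos⟩⟩
  obtain ⟨i, hi⟩ := Fintype.exists_le_card_fiber_of_nsmul_le_card c
    (b := (Fintype.card V : ℝ) / dc A) (by simp [mul_div_cancel₀, hpos.ne'])
  refine ⟨univ.filter (c · = i), by simpa using hc i, ?_⟩
  rwa [div_le_iff₀' (by exact_mod_cast hpos)] at hi

end Dichromatic

end Digraph

/-- If `T` is a tournament of order `n`, then `n/2 ≤ dc(T)·dac(T)`. -/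
theorem stmt14 {V : Type*} [Fintype V] (A : V → V → Prop)
    (hT : IsTournament A) :
    (Fintype.card V : ℝ) / 2 ≤ (dc A : ℝ) * (dac A : ℝ) := by
  obtain ⟨S, hS, hcard⟩ := exists_acyclicSet_card_le_dc_mul hT.1
  have hS2 : (#S : ℝ) ≤ 2 * dac A := by exact_mod_cast hT.card_le_two_mul_dac S hS
  calc (Fintype.card V : ℝ) / 2 ≤ dc A * #S / 2 := by gcongr
    _ ≤ dc A * dac A := by nlinarith [(dc A).cast_nonneg (α := ℝ)]
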